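/- arXiv:1106.1499 — 5 statements merged into one kernel-verified Lean document; each statement's English description precedes it below -/
import Mathlib

section
/- Let G be a group with a left-invariant total order ≤, let X ∈ G with 1 ≤ X, and let g, h ∈ G each commute with X. Suppose X^q ≤ g^p and X^s ≤ h^r for integers p, q, r, s with p, r > 0. If g and h commute, then X^(p·s + q·r) ≤ (g·h)^(p·r). -/
private lemma pow_le_pow_commute {G : Type*} [Group G] [LinearOrder G]
    [CovariantClass G G (· * ·) (· ≤ ·)] {a b : G} (hab : Commute a b)
    (h : a ≤ b) (n : ℕ) : a ^ n ≤ b ^ n := by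
  induction n with
  | zero => simp
  | succ n ih =>
    calc a ^ (n + 1) = a ^ n * a := pow_succ a n
      _ ≤ a ^ n * b := mul_le_mul_right h _
      _ = b * a ^ n := (hab.pow_left n)
      _ ≤ b * b ^ n := mul_le_mul_right ih _
      _ = b ^ (n + 1) := (pow_succ' b n).symm

private lemma zpow_le_zpow_commute {G : Type*} [Group G] [LinearOrder G]
    [CovariantClass G G (· * ·) (· ≤ ·)] {a b : G} (hab : Commute a b)
    (h : a ≤ b) {m : ℤ} (hm : 0 < m) : a ^ m ≤ b ^ m := by
  obtain ⟨n, rfl⟩ := Int.eq_ofNat_of_zero_le hm.le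
  rw [zpow_natCast, zpow_natCast]
  exact pow_le_pow_commute hab h n

theorem stmt4 {G : Type*} [Group G] [LinearOrder G]
    [CovariantClass G G (· * ·) (· ≤ ·)]
    (X g h : G) (hX : 1 ≤ X)
    (hgX : g * X = X * g) (hhX : h * X = X * h)
    (p q r s : ℤ) (hp : 0 < p) (hr : 0 < r)
    (h1 : X ^ q ≤ g ^ p) (h2 : X ^ s ≤ h ^ r)
    (hgh : g * h = h * g) :
    X ^ (p * s + q * r) ≤ (g * h) ^ (p * r) := by
  have cg : Commute g X := hgX
  have ch : Commute h X := hhX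
  have c1 : Commute (X ^ q) (g ^ p) := (cg.symm).zpow_zpow q p
  have c2 : Commute (X ^ s) (h ^ r) := (ch.symm).zpow_zpow s r
  have h1' : X ^ (q * r) ≤ g ^ (p * r) := by
    rw [zpow_mul, zpow_mul]
    exact zpow_le_zpow_commute c1 h1 hr
  have h2' : X ^ (s * p) ≤ h ^ (r * p) := by
    rw [zpow_mul, zpow_mul]
    exact zpow_le_zpow_commute c2 h2 hp
  calc X ^ (p * s + q * r) = X ^ (p * s) * X ^ (q * r) := zpow_add X _ _
    _ ≤ X ^ (p * s) * g ^ (p * r) := mul_le_mul_right h1' _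
    _ = g ^ (p * r) * X ^ (p * s) := ((cg.symm).zpow_zpow _ _)
    _ ≤ g ^ (p * r) * h ^ (p * r) := by
        rw [mul_comm s p, mul_comm r p] at h2'
        exact mul_le_mul_right h2' _
    _ = (g * h) ^ (p * r) := ((Commute.mul_zpow hgh _)).symm
end

section
/- Let G be a group with a left-invariant total order ≤, let X, Y ∈ G with 1 ≤ X and 1 ≤ Y and XY = YX, and let g ∈ G commute with both X and Y. Suppose X^q ≤ g^p and Y^s ≤ g^r for integers p, q, r, s with q, s > 0. Then (X·Y)^(s·q) ≤ g^(s·p + q·r). -/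
private lemma pow_le_pow_of_commute {G : Type*} [Group G] [LinearOrder G]
    [CovariantClass G G (· * ·) (· ≤ ·)]
    {a b : G} (hab : a ≤ b) (hc : Commute a b) (n : ℕ) : a ^ n ≤ b ^ n := by
  induction n with
  | zero => simp
  | succ n ih =>
    have h1 : a ^ (n + 1) = a * a ^ n := by rw [pow_succ']
    have h2 : a * a ^ n ≤ a * b ^ n := mul_le_mul_right ih a
    have h3 : a * b ^ n = b ^ n * a := (hc.pow_right n).eq
    have h4 : b ^ n * a ≤ b ^ n * b := mul_le_mul_right hab _
    calc a ^ (n + 1) = a * a ^ n := h1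
      _ ≤ a * b ^ n := h2
      _ = b ^ n * a := h3
      _ ≤ b ^ n * b := h4
      _ = b ^ (n + 1) := (pow_succ b n).symm

private lemma zpow_le_zpow_of_commute {G : Type*} [Group G] [LinearOrder G]
    [CovariantClass G G (· * ·) (· ≤ ·)]
    {a b : G} (hab : a ≤ b) (hc : Commute a b) {n : ℤ} (hn : 0 ≤ n) :
    a ^ n ≤ b ^ n := by
  obtain ⟨m, rfl⟩ := Int.eq_ofNat_of_zero_le hn
  simpa [zpow_natCast] using pow_le_pow_of_commute hab hc m

theorem stmt6 {G : Type*} [Group G] [LinearOrder G]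
    [CovariantClass G G (· * ·) (· ≤ ·)]
    (X Y g : G) (hX : 1 ≤ X) (hY : 1 ≤ Y) (hXY : X * Y = Y * X)
    (hgX : g * X = X * g) (hgY : g * Y = Y * g)
    (p q r s : ℤ) (hq : 0 < q) (hs : 0 < s)
    (h1 : X ^ q ≤ g ^ p) (h2 : Y ^ s ≤ g ^ r) :
    (X * Y) ^ (s * q) ≤ g ^ (s * p + q * r) := by
  have hcXY : Commute X Y := hXY
  have hcgX : Commute g X := hgX
  have hcgY : Commute g Y := hgY
  have hXsq : X ^ (s * q) ≤ g ^ (s * p) := by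
    have := zpow_le_zpow_of_commute h1 ((hcgX.symm.zpow_left q).zpow_right p) hs.le
    rw [← zpow_mul, ← zpow_mul] at this
    rwa [mul_comm q s, mul_comm p s] at this
  have hYsq : Y ^ (s * q) ≤ g ^ (q * r) := by
    have := zpow_le_zpow_of_commute h2 ((hcgY.symm.zpow_left s).zpow_right r) hq.le
    rw [← zpow_mul, ← zpow_mul] at this
    rwa [mul_comm r q] at this
  have key : (X * Y) ^ (s * q) = X ^ (s * q) * Y ^ (s * q) := hcXY.mul_zpow _
  rw [key, zpow_add]
  calc X ^ (s * q) * Y ^ (s * q)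
      ≤ X ^ (s * q) * g ^ (q * r) := mul_le_mul_right hYsq _
    _ = g ^ (q * r) * X ^ (s * q) := ((hcgX.zpow_zpow (q * r) (s * q)).symm).eq
    _ ≤ g ^ (q * r) * g ^ (s * p) := mul_le_mul_right hXsq _
    _ = g ^ (s * p) * g ^ (q * r) := by rw [← zpow_add, ← zpow_add, add_comm]
end

section
/- Let G be a group with a left-invariant total order ≤ and let W₁, W₂ ∈ G with XW₁ = W₁X where X ∈ G satisfies W₁^3 = W₂^4 = X and 1 < X. Then X < (W₁·W₂)^3, i.e. (W₁W₂)^3 > W₁^3. -/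
/-! Writing `cₖ = W₁⁻ᵏ W₂ W₁ᵏ`, one has `(W₁ W₂)ⁿ = W₁ⁿ cₙ₋₁ ⋯ c₁ c₀`, so by left-invariance it
suffices that every `cₖ` is positive. Since `W₁` commutes with `X = W₁³`, `cₖ⁴ = W₁⁻ᵏ X W₁ᵏ = X > 1`,
and in a left-ordered group an element with a positive power is positive. -/

theorem inv_pow_mul_mul_pow_succ {G : Type*} [Group G] (w v : G) (n : ℕ) :
    (w ^ (n + 1))⁻¹ * (w * v) ^ (n + 1) = ((w ^ n)⁻¹ * v * w ^ n) * ((w ^ n)⁻¹ * (w * v) ^ n) := by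
  simp only [pow_succ', mul_inv_rev, mul_assoc, inv_mul_cancel_left, mul_inv_cancel_left]

section LeftOrderedGroup

variable {G : Type*} [Group G] [LinearOrder G] [MulLeftMono G]

theorem one_le_inv_pow_mul_mul_pow {w v : G} {n : ℕ}
    (hv : ∀ k < n, 1 < (w ^ k)⁻¹ * v * w ^ k) : 1 ≤ (w ^ n)⁻¹ * (w * v) ^ n := by
  induction n with
  | zero => simp
  | succ n ih =>
    rw [inv_pow_mul_mul_pow_succ]
    exact one_le_mul (hv n n.lt_succ_self).le (ih fun k hk => hv k (hk.trans n.lt_succ_self))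

theorem pow_lt_mul_pow_of_one_lt_conj {w v : G} {n : ℕ} (hn : n ≠ 0)
    (hv : ∀ k < n, 1 < (w ^ k)⁻¹ * v * w ^ k) : w ^ n < (w * v) ^ n := by
  obtain ⟨m, rfl⟩ := Nat.exists_eq_succ_of_ne_zero hn
  rw [← lt_inv_mul_iff_lt, inv_pow_mul_mul_pow_succ]
  exact one_lt_mul_of_lt_of_le' (hv m m.lt_succ_self)
    (one_le_inv_pow_mul_mul_pow fun k hk => hv k (hk.trans m.lt_succ_self))

end LeftOrderedGroup

theorem stmt9_general {G : Type*} [Group G] [LinearOrder G]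
    [CovariantClass G G (· * ·) (· ≤ ·)]
    (W₁ W₂ X : G)
    (h1 : W₁ ^ 3 = X) (h2 : W₂ ^ 4 = X) (hX : 1 < X) :
    X < (W₁ * W₂) ^ 3 := by
  rw [← h1]
  refine pow_lt_mul_pow_of_one_lt_conj three_ne_zero fun k _ => ?_
  have hconj : ((W₁ ^ k)⁻¹ * W₂ * W₁ ^ k) ^ 4 = W₁ ^ 3 :=
    calc ((W₁ ^ k)⁻¹ * W₂ * W₁ ^ k) ^ 4 = (W₁ ^ k)⁻¹ * W₂ ^ 4 * W₁ ^ k := by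
          simpa using conj_pow (a := (W₁ ^ k)⁻¹) (b := W₂) (i := 4)
      _ = (W₁ ^ k)⁻¹ * (W₁ ^ k * W₁ ^ 3) := by
          rw [h2, ← h1, mul_assoc, (Commute.pow_pow_self W₁ k 3).eq]
      _ = W₁ ^ 3 := inv_mul_cancel_left _ _
  rwa [← one_lt_pow_iff four_ne_zero, hconj, h1]

theorem stmt9 {G : Type*} [Group G] [LinearOrder G]
    [CovariantClass G G (· * ·) (· ≤ ·)]
    (W₁ W₂ X : G) (hcomm : W₁ * X = X * W₁)
    (h1 : W₁ ^ 3 = X) (h2 : W₂ ^ 4 = X) (hX : 1 < X) :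
    X < (W₁ * W₂) ^ 3 :=
  stmt9_general W₁ W₂ X h1 h2 hX
end

section
/- Let G be a group with a left-invariant total order ≤ and let W₁, W₂, X ∈ G with W₁^3 = W₂^4 = X and 1 < X. Then (W₁·W₂)^4 < X^5. -/
private lemma mull10 {G : Type*} [Group G] [LinearOrder G]
    [CovariantClass G G (· * ·) (· ≤ ·)] (c : G) {a b : G} (h : a < b) :
    c * a < c * b :=
  lt_of_le_of_ne (mul_le_mul_right h.le c) (fun e => h.ne (mul_left_cancel e))

private lemma root10 {G : Type*} [Group G] [LinearOrder G]
    [CovariantClass G G (· * ·) (· ≤ ·)] {Y X : G} (h : Y ^ 3 = X)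
    (hX : 1 < X) : Y < X := by
  by_cases h1Y : 1 < Y
  · have a : Y < Y * Y := by simpa using mull10 Y h1Y
    calc Y < Y * Y := a
      _ < Y * (Y * Y) := mull10 Y a
      _ = Y ^ 3 := by simp [pow_succ, mul_assoc]
      _ = X := h
  · exact lt_of_le_of_lt (le_of_not_gt h1Y) hX

theorem stmt10 {G : Type*} [Group G] [LinearOrder G]
    [CovariantClass G G (· * ·) (· ≤ ·)]
    (W₁ W₂ X : G) (h1 : W₁ ^ 3 = X) (h2 : W₂ ^ 4 = X) (hX : 1 < X) :
    (W₁ * W₂) ^ 4 < X ^ 5 := by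
  set C₁ : G := W₂⁻¹ * W₁ * W₂ with hC₁def
  set C₂ : G := W₂⁻¹ * W₂⁻¹ * W₁ * W₂ * W₂ with hC₂def
  set C₃ : G := W₂⁻¹ * W₂⁻¹ * W₂⁻¹ * W₁ * W₂ * W₂ * W₂ with hC₃def
  have hc1 : C₁ ^ 3 = X := by
    have e : (W₂⁻¹ * W₁ * W₂) ^ 3 = W₂⁻¹ * W₁ ^ 3 * W₂ := by
      simp [pow_succ, mul_assoc]
    rw [hC₁def, e, h1, ← h2]
    simp [pow_succ, mul_assoc]
  have hc2 : C₂ ^ 3 = X := by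
    have e : (W₂⁻¹ * W₂⁻¹ * W₁ * W₂ * W₂) ^ 3
        = W₂⁻¹ * W₂⁻¹ * W₁ ^ 3 * W₂ * W₂ := by
      simp [pow_succ, mul_assoc]
    rw [hC₂def, e, h1, ← h2]
    simp [pow_succ, mul_assoc]
  have hc3 : C₃ ^ 3 = X := by
    have e : (W₂⁻¹ * W₂⁻¹ * W₂⁻¹ * W₁ * W₂ * W₂ * W₂) ^ 3
        = W₂⁻¹ * W₂⁻¹ * W₂⁻¹ * W₁ ^ 3 * W₂ * W₂ * W₂ := by
      simp [pow_succ, mul_assoc]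
    rw [hC₃def, e, h1, ← h2]
    simp [pow_succ, mul_assoc]
  -- each cube root is < X
  have lW : W₁ < X := root10 h1 hX
  have l1 : C₁ < X := root10 hc1 hX
  have l2 : C₂ < X := root10 hc2 hX
  have l3 : C₃ < X := root10 hc3 hX
  -- X commutes with all cube roots
  have comm : ∀ Y : G, Y ^ 3 = X → Y * X = X * Y := by
    intro Y h
    have e : Y * Y ^ 3 = Y ^ 3 * Y := by simp [pow_succ, mul_assoc]
    rw [h] at e; exact e
  have cW := comm W₁ h1
  have c1 := comm C₁ hc1
  have c2 := comm C₂ hc2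
  have c3 := comm C₃ hc3
  -- products of commuting elements commute
  have mvX : ∀ a b : G, a * X = X * a → b * X = X * b →
      a * b * X = X * (a * b) := by
    intro a b ha hb
    rw [mul_assoc, hb, ← mul_assoc, ha, mul_assoc]
  have cW3 : W₁ * C₃ * X = X * (W₁ * C₃) := mvX W₁ C₃ cW c3
  have cW32 : W₁ * C₃ * C₂ * X = X * (W₁ * C₃ * C₂) := mvX (W₁ * C₃) C₂ cW3 c2
  -- the factorization
  have factor0 : (W₁ * W₂) ^ 4 = W₁ * X * (C₃ * C₂ * C₁) := by
    rw [hC₁def, hC₂def, hC₃def, ← h2]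
    simp [pow_succ, mul_assoc]
  have factor : (W₁ * W₂) ^ 4 = X * (W₁ * C₃ * C₂ * C₁) := by
    rw [factor0, cW]
    simp [mul_assoc]
  -- build the chain
  have t2 : W₁ * C₃ < X * X :=
    calc W₁ * C₃ < W₁ * X := mull10 W₁ l3
      _ = X * W₁ := cW
      _ < X * X := mull10 X lW
  have t3 : W₁ * C₃ * C₂ < X * (X * X) :=
    calc W₁ * C₃ * C₂ < W₁ * C₃ * X := mull10 _ l2
      _ = X * (W₁ * C₃) := cW3
      _ < X * (X * X) := mull10 X t2
  have t4 : W₁ * C₃ * C₂ * C₁ < X * (X * (X * X)) :=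
    calc W₁ * C₃ * C₂ * C₁ < W₁ * C₃ * C₂ * X := mull10 _ l1
      _ = X * (W₁ * C₃ * C₂) := cW32
      _ < X * (X * (X * X)) := mull10 X t3
  calc (W₁ * W₂) ^ 4 = X * (W₁ * C₃ * C₂ * C₁) := factor
    _ < X * (X * (X * (X * X))) := mull10 X t4
    _ = X ^ 5 := by simp [pow_succ, mul_assoc]
end

section
/- Let G be a group with a left-invariant total order ≤, and let X, W, Y ∈ G. Suppose (W⁻¹·X)^p = X^(q−p) for integers q > p > 0 (coming from a rational tangle Q(−p/q) relation), W commutes with X, and 1 ≤ Y⁻¹XY. Then 1 ≤ Y⁻¹(W⁻¹X)Y. -/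
theorem stmt15 {G : Type*} [Group G] [LinearOrder G]
    [CovariantClass G G (· * ·) (· ≤ ·)]
    (X W Y : G) (p q : ℤ) (hp : 0 < p) (hpq : p < q)
    (hrel : (W⁻¹ * X) ^ p = X ^ (q - p))
    (hcomm : W * X = X * W)
    (hpos : 1 ≤ Y⁻¹ * X * Y) :
    1 ≤ Y⁻¹ * (W⁻¹ * X) * Y := by
  set a := Y⁻¹ * (W⁻¹ * X) * Y with ha
  have key : 1 ≤ a ^ p := by
    have h1 : a ^ p = Y⁻¹ * (W⁻¹ * X) ^ p * Y := by
      rw [ha]; simpa using conj_zpow (i := p) (a := Y⁻¹) (b := W⁻¹ * X)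
    have h2 : (Y⁻¹ * X * Y) ^ (q - p) = Y⁻¹ * X ^ (q - p) * Y := by
      simpa using conj_zpow (i := q - p) (a := Y⁻¹) (b := X)
    rw [h1, hrel, ← h2]
    exact one_le_zpow hpos (by omega)
  by_contra h
  push_neg at h
  obtain ⟨n, hn⟩ : ∃ n : ℕ, p = (n : ℤ) := ⟨p.toNat, by omega⟩
  have hn0 : 0 < n := by omega
  have : a ^ p < 1 := by
    rw [hn, zpow_natCast]
    exact pow_lt_one' h hn0.ne'
  exact absurd key this.not_ge
end
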